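/- Let Z be an integrable random vector in ℝ^q with radial distribution and f : ℝ^d → ℝ convex with linear growth. Define the pre-order A ⪯ B on M_{d,q}(ℝ) by: B Bᵀ − A Aᵀ is positive semidefinite. Then for every x ∈ ℝ^d, A ⪯ B implies E[f(x + A Z)] ≤ E[f(x + B Z)]. -/

import Mathlib

/-!
By Douglas' factorization lemma, `B Bᵀ - A Aᵀ ⪰ 0` gives `A = B K` with `K Kᵀ ⪯ 1`. A singular
value decomposition `K = W diag(μ) O` (with `W`, `O` orthogonal and `|μᵢ| ≤ 1`), together with
`[-1, 1]^q = conv {±1}^q`, writes `K` as a convex combination `∑ wᵢ Uᵢ` of orthogonal matrices.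
Jensen's inequality gives `f (x + B K z) ≤ ∑ wᵢ f (x + B Uᵢ z)`, and each term on the right has the
expectation of `f (x + B Z)` because `Uᵢ Z` has the law of `Z`.
-/

open MeasureTheory Matrix ProbabilityTheory

namespace LinearMap

theorem exists_comp_rangeRestrict_eq_of_norm_le {R E F G : Type*} [Ring R]
    [AddCommGroup E] [Module R E] [NormedAddCommGroup F] [Module R F]
    [NormedAddCommGroup G] [Module R G] {S : E →ₗ[R] F} {T : E →ₗ[R] G}
    (h : ∀ x, ‖T x‖ ≤ ‖S x‖) : ∃ L : range S →ₗ[R] G, L ∘ₗ S.rangeRestrict = T := by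
  have hker : ker S ≤ ker T := fun x hx =>
    mem_ker.mpr (norm_le_zero_iff.mp ((h x).trans_eq (by rw [mem_ker.mp hx, norm_zero])))
  refine ⟨(ker S).liftQ T hker ∘ₗ S.quotKerEquivRange.symm.toLinearMap, ?_⟩
  ext x
  change (ker S).liftQ T hker (S.quotKerEquivRange.symm ⟨S x, mem_range_self S x⟩) = T x
  rw [quotKerEquivRange_symm_apply_image, Submodule.mkQ_apply, Submodule.liftQ_apply]

variable {𝕜 E F G : Type*} [RCLike 𝕜] [AddCommGroup E] [Module 𝕜 E]
  [NormedAddCommGroup F] [InnerProductSpace 𝕜 F] [FiniteDimensional 𝕜 F]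
  [NormedAddCommGroup G] [InnerProductSpace 𝕜 G]

theorem exists_contraction_comp_eq {S : E →ₗ[𝕜] F} {T : E →ₗ[𝕜] G}
    (h : ∀ x, ‖T x‖ ≤ ‖S x‖) : ∃ L : F →ₗ[𝕜] G, (∀ y, ‖L y‖ ≤ ‖y‖) ∧ T = L ∘ₗ S := by
  obtain ⟨L, hL⟩ := exists_comp_rangeRestrict_eq_of_norm_le h
  have hLnorm : ∀ y, ‖L y‖ ≤ ‖y‖ := by
    intro y
    obtain ⟨x, rfl⟩ := S.surjective_rangeRestrict y
    simpa [← hL] using h x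
  refine ⟨L ∘ₗ (range S).orthogonalProjectionOnto.toLinearMap, fun y => ?_, ?_⟩
  · exact (hLnorm _).trans ((range S).norm_orthogonalProjectionOnto_apply_le y)
  · rw [← hL]
    ext x
    exact congrArg L (Submodule.orthogonalProjectionOnto_mem_subspace_eq_self _).symm

theorem exists_linearIsometry_comp_eq {S T : E →ₗ[𝕜] F}
    (h : ∀ x, ‖T x‖ = ‖S x‖) : ∃ L : F →ₗᵢ[𝕜] F, T = L.toLinearMap ∘ₗ S := by
  obtain ⟨L, hL⟩ := exists_comp_rangeRestrict_eq_of_norm_le fun x => (h x).le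
  have hLnorm : ∀ y, ‖L y‖ = ‖y‖ := by
    intro y
    obtain ⟨x, rfl⟩ := S.surjective_rangeRestrict y
    simpa [← hL] using h x
  refine ⟨(⟨L, hLnorm⟩ : range S →ₗᵢ[𝕜] F).extend, ?_⟩
  rw [← hL]
  ext x
  exact (LinearIsometry.extend_apply ⟨L, hLnorm⟩ (S.rangeRestrict x)).symm

end LinearMap

namespace Matrix

variable {m n : Type*} [Fintype m] [DecidableEq m] [Fintype n]

theorem norm_toEuclideanLin_transpose_sq (M : Matrix m n ℝ) (y : EuclideanSpace ℝ m) :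
    ‖toEuclideanLin Mᵀ y‖ ^ 2 = y.ofLp ⬝ᵥ (M * Mᵀ) *ᵥ y.ofLp := by
  rw [← real_inner_self_eq_norm_sq, EuclideanSpace.inner_eq_star_dotProduct, ← mulVec_mulVec,
    dotProduct_mulVec, ← mulVec_transpose]
  simp [toLpLin_apply]

theorem posSemidef_mul_transpose_sub_iff (A B : Matrix m n ℝ) :
    (B * Bᵀ - A * Aᵀ).PosSemidef ↔ ∀ y, ‖toEuclideanLin Aᵀ y‖ ≤ ‖toEuclideanLin Bᵀ y‖ := by
  have hherm : (B * Bᵀ - A * Aᵀ).IsHermitian :=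
    (isHermitian_mul_conjTranspose_self B).sub (isHermitian_mul_conjTranspose_self A)
  rw [posSemidef_iff_dotProduct_mulVec, and_iff_right hherm,
    ← (WithLp.equiv 2 (m → ℝ)).symm.forall_congr_right]
  refine forall_congr' fun y => ?_
  rw [← sq_le_sq₀ (norm_nonneg _) (norm_nonneg _), norm_toEuclideanLin_transpose_sq,
    norm_toEuclideanLin_transpose_sq, sub_mulVec, dotProduct_sub, sub_nonneg, star_trivial]
  rfl

variable [DecidableEq n]

theorem mem_orthogonalGroup_toEuclideanLin_symm
    (L : EuclideanSpace ℝ n →ₗᵢ[ℝ] EuclideanSpace ℝ n) :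
    toEuclideanLin.symm L.toLinearMap ∈ orthogonalGroup n ℝ :=
  (L.toLinearIsometryEquiv rfl).toMatrix_mem_unitaryGroup (EuclideanSpace.basisFun n ℝ)
    (EuclideanSpace.basisFun n ℝ)

theorem exists_mem_orthogonalGroup_eq_mul_of_mul_transpose_eq {M N : Matrix m n ℝ}
    (h : M * Mᵀ = N * Nᵀ) : ∃ O ∈ orthogonalGroup n ℝ, M = N * O := by
  obtain ⟨L, hL⟩ := LinearMap.exists_linearIsometry_comp_eq
    (S := toEuclideanLin Nᵀ) (T := toEuclideanLin Mᵀ) fun y => by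
      rw [← sq_eq_sq₀ (norm_nonneg _) (norm_nonneg _), norm_toEuclideanLin_transpose_sq,
        norm_toEuclideanLin_transpose_sq, h]
  refine ⟨(toEuclideanLin.symm L.toLinearMap)ᵀ,
    transpose_mem_unitaryGroup_iff.mpr (mem_orthogonalGroup_toEuclideanLin_symm L), ?_⟩
  have hMt : Mᵀ = toEuclideanLin.symm L.toLinearMap * Nᵀ :=
    toEuclideanLin.injective (by simp [hL])
  simpa using congrArg transpose hMt

theorem posSemidef_one_sub_mul_transpose_iff (K : Matrix n n ℝ) :
    (1 - K * Kᵀ).PosSemidef ↔ ∀ y, ‖toEuclideanLin Kᵀ y‖ ≤ ‖y‖ := by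
  simpa using posSemidef_mul_transpose_sub_iff K 1

theorem exists_eq_mul_of_posSemidef_mul_transpose_sub {A B : Matrix m n ℝ}
    (h : (B * Bᵀ - A * Aᵀ).PosSemidef) :
    ∃ K : Matrix n n ℝ, A = B * K ∧ (1 - K * Kᵀ).PosSemidef := by
  obtain ⟨L, hL_le, hL⟩ :=
    LinearMap.exists_contraction_comp_eq ((posSemidef_mul_transpose_sub_iff A B).mp h)
  have hAt : Aᵀ = toEuclideanLin.symm L * Bᵀ := toEuclideanLin.injective (by simp [hL])
  refine ⟨(toEuclideanLin.symm L)ᵀ, by simpa using congrArg transpose hAt, ?_⟩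
  rw [posSemidef_one_sub_mul_transpose_iff]
  simpa using hL_le

theorem exists_eq_mul_diagonal_mul (K : Matrix n n ℝ) :
    ∃ W ∈ orthogonalGroup n ℝ, ∃ O ∈ orthogonalGroup n ℝ, ∃ μ : n → ℝ,
      K = W * diagonal μ * O := by
  have hS := posSemidef_self_mul_conjTranspose K
  set W : Matrix n n ℝ := (hS.1.eigenvectorUnitary : Matrix n n ℝ)
  set μ : n → ℝ := fun i => √(hS.1.eigenvalues i)
  have hKK : K * Kᵀ = (W * diagonal μ) * (W * diagonal μ)ᵀ := by
    have hμ : (fun i => μ i * μ i) = hS.1.eigenvalues := funext fun i =>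
      Real.mul_self_sqrt (hS.eigenvalues_nonneg i)
    have := hS.1.spectral_theorem
    simp only [Unitary.conjStarAlgAut_apply, conjTranspose_eq_transpose_of_trivial] at this
    rw [this, transpose_mul, diagonal_transpose, mul_assoc W, ← mul_assoc (diagonal μ),
      diagonal_mul_diagonal, hμ, ← mul_assoc]
    rfl
  obtain ⟨O, hO, hK⟩ := exists_mem_orthogonalGroup_eq_mul_of_mul_transpose_eq hKK
  exact ⟨W, hS.1.eigenvectorUnitary.2, O, hO, μ, hK⟩

theorem diagonal_mem_convexHull_orthogonalGroup {μ : n → ℝ} (hμ : ∀ i, |μ i| ≤ 1) :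
    diagonal μ ∈ convexHull ℝ (orthogonalGroup n ℝ : Set (Matrix n n ℝ)) := by
  have hcube : μ ∈ convexHull ℝ (Set.univ.pi fun _ => ({-1, 1} : Set ℝ)) := by
    rw [convexHull_pi]
    intro i _
    rw [convexHull_pair, segment_eq_Icc (by norm_num)]
    exact abs_le.mp (hμ i)
  have hsigns : diagonalLinearMap n ℝ ℝ '' Set.univ.pi (fun _ => {-1, 1}) ⊆
      (orthogonalGroup n ℝ : Set (Matrix n n ℝ)) := by
    rintro _ ⟨ε, hε, rfl⟩
    rw [SetLike.mem_coe, mem_orthogonalGroup_iff]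
    have hε2 : ∀ i, ε i * ε i = 1 := fun i => by
      obtain h | h : ε i = -1 ∨ ε i = 1 := hε i trivial <;> rw [h] <;> norm_num
    change diagonal ε * star (diagonal ε) = 1
    rw [star_eq_conjTranspose, diagonal_conjTranspose, diagonal_mul_diagonal, ← diagonal_one]
    exact congrArg diagonal (funext hε2)
  refine convexHull_mono hsigns ?_
  rw [← LinearMap.image_convexHull]
  exact ⟨μ, hcube, rfl⟩

theorem mul_mul_mem_convexHull_orthogonalGroup {W X O : Matrix n n ℝ}
    (hW : W ∈ orthogonalGroup n ℝ) (hX : X ∈ convexHull ℝ (orthogonalGroup n ℝ : Set _))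
    (hO : O ∈ orthogonalGroup n ℝ) :
    W * X * O ∈ convexHull ℝ (orthogonalGroup n ℝ : Set (Matrix n n ℝ)) := by
  let f : Matrix n n ℝ →ₗ[ℝ] Matrix n n ℝ := LinearMap.mulLeft ℝ W ∘ₗ LinearMap.mulRight ℝ O
  have hf : f '' orthogonalGroup n ℝ ⊆ orthogonalGroup n ℝ := by
    rintro _ ⟨U, hU, rfl⟩
    simpa [f, mul_assoc] using mul_mem (mul_mem hW hU) hO
  refine convexHull_mono hf ?_
  rw [← LinearMap.image_convexHull]
  exact ⟨X, hX, by simp [f, mul_assoc]⟩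

theorem mem_convexHull_orthogonalGroup_of_posSemidef_one_sub {K : Matrix n n ℝ}
    (hK : (1 - K * Kᵀ).PosSemidef) :
    K ∈ convexHull ℝ (orthogonalGroup n ℝ : Set (Matrix n n ℝ)) := by
  obtain ⟨W, hW, O, hO, μ, rfl⟩ := exists_eq_mul_diagonal_mul K
  have hconj : Wᵀ * (1 - (W * diagonal μ * O) * (W * diagonal μ * O)ᵀ) * W
      = diagonal fun i => 1 - μ i * μ i := by
    have hWW : Wᵀ * W = 1 := (mem_orthogonalGroup_iff' n ℝ).mp hW
    have hOO : O * Oᵀ = 1 := (mem_orthogonalGroup_iff n ℝ).mp hO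
    rw [show (diagonal fun i => 1 - μ i * μ i) = 1 - diagonal μ * diagonal μ by
      rw [diagonal_mul_diagonal, ← diagonal_one, diagonal_sub]]
    simp only [transpose_mul, diagonal_transpose, Matrix.mul_sub, Matrix.sub_mul, Matrix.mul_assoc]
    simp only [← Matrix.mul_assoc Wᵀ W, ← Matrix.mul_assoc O Oᵀ, hWW, hOO, Matrix.one_mul,
      Matrix.mul_one]
  have hμ : ∀ i, |μ i| ≤ 1 := by
    have := hK.conjTranspose_mul_mul_same W
    rw [conjTranspose_eq_transpose_of_trivial, hconj, posSemidef_diagonal_iff] at this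
    exact fun i => abs_le_one_iff_mul_self_le_one.mpr (sub_nonneg.mp (this i))
  exact mul_mul_mem_convexHull_orthogonalGroup hW (diagonal_mem_convexHull_orthogonalGroup hμ) hO

end Matrix

theorem integrable_comp_of_abs_le_mul_one_add_norm {Ω E : Type*} [MeasurableSpace Ω]
    {P : Measure Ω} [IsFiniteMeasure P] [NormedAddCommGroup E] {f : E → ℝ} {C : ℝ}
    (hf : Continuous f) (hgrowth : ∀ y, |f y| ≤ C * (1 + ‖y‖)) {Y : Ω → E}
    (hY : Integrable Y P) : Integrable (fun ω => f (Y ω)) P := by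
  refine Integrable.mono' ((integrable_const C).add (hY.norm.const_mul C))
    (hf.comp_aestronglyMeasurable hY.1) (ae_of_all _ fun ω => ?_)
  simpa [mul_add] using hgrowth (Y ω)

theorem integral_comp_mulVec_le_of_mem_convexHull {Ω n : Type*} [MeasurableSpace Ω]
    {P : Measure Ω} [Fintype n] [DecidableEq n] {Z : Ω → n → ℝ} (hZ : AEMeasurable Z P)
    (hradial : ∀ O ∈ orthogonalGroup n ℝ, P.map (fun ω => O *ᵥ Z ω) = P.map Z)
    {g : (n → ℝ) → ℝ} (hg : ConvexOn ℝ Set.univ g) (hgZ : Integrable (fun ω => g (Z ω)) P)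
    {K : Matrix n n ℝ} (hgKZ : Integrable (fun ω => g (K *ᵥ Z ω)) P)
    (hK : K ∈ convexHull ℝ (orthogonalGroup n ℝ : Set (Matrix n n ℝ))) :
    ∫ ω, g (K *ᵥ Z ω) ∂P ≤ ∫ ω, g (Z ω) ∂P := by
  have hg_cont : Continuous g := continuousOn_univ.mp (hg.continuousOn isOpen_univ)
  have hident : ∀ O ∈ orthogonalGroup n ℝ,
      IdentDistrib (fun ω => g (O *ᵥ Z ω)) (fun ω => g (Z ω)) P P := fun O hO =>
    have hOZ : AEMeasurable (fun ω => O *ᵥ Z ω) P :=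
      (continuous_const.matrix_mulVec continuous_id).measurable.comp_aemeasurable hZ
    IdentDistrib.comp ⟨hOZ, hZ, hradial O hO⟩ hg_cont.measurable
  obtain ⟨ι, _, w, U, hw_nonneg, hw_sum, hU, rfl⟩ := mem_convexHull_iff_exists_fintype.mp hK
  have hjensen : ∀ ω, g ((∑ i, w i • U i) *ᵥ Z ω) ≤ ∑ i, w i * g (U i *ᵥ Z ω) := fun ω => by
    simpa [sum_mulVec, smul_mulVec] using
      hg.map_sum_le (fun i _ => hw_nonneg i) hw_sum (fun _ _ => Set.mem_univ _)
  have hint : ∀ i, Integrable (fun ω => g (U i *ᵥ Z ω)) P := fun i =>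
    (hident _ (hU i)).integrable_iff.mpr hgZ
  calc ∫ ω, g ((∑ i, w i • U i) *ᵥ Z ω) ∂P
      ≤ ∫ ω, ∑ i, w i * g (U i *ᵥ Z ω) ∂P :=
        integral_mono hgKZ (integrable_finsetSum _ fun i _ => (hint i).const_mul _) hjensen
    _ = ∑ i, w i * ∫ ω, g (Z ω) ∂P := by
        rw [integral_finsetSum _ fun i _ => (hint i).const_mul _]
        simp only [integral_const_mul, (hident _ (hU _)).integral_eq]
    _ = ∫ ω, g (Z ω) ∂P := by rw [← Finset.sum_mul, hw_sum, one_mul]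

theorem T_monotone_matrix_preorder_general (d q : ℕ)
    (Ω : Type*) [MeasurableSpace Ω] (P : Measure Ω) [IsProbabilityMeasure P]
    (Z : Ω → (Fin q → ℝ)) (hZint : Integrable Z P)
    (hradial : ∀ O ∈ Matrix.orthogonalGroup (Fin q) ℝ,
      Measure.map (fun ω => (O : Matrix (Fin q) (Fin q) ℝ).mulVec (Z ω)) P
        = Measure.map Z P)
    (f : (Fin d → ℝ) → ℝ) (hf : ConvexOn ℝ Set.univ f)
    (C : ℝ) (hgrowth : ∀ x, |f x| ≤ C * (1 + ‖x‖)) :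
    ∀ (x : Fin d → ℝ) (A B : Matrix (Fin d) (Fin q) ℝ),
      (B * Bᵀ - A * Aᵀ).PosSemidef →
      ∫ ω, f (x + A.mulVec (Z ω)) ∂P ≤ ∫ ω, f (x + B.mulVec (Z ω)) ∂P := by
  intro x A B hAB
  obtain ⟨K, rfl, hK⟩ := exists_eq_mul_of_posSemidef_mul_transpose_sub hAB
  have hf_cont : Continuous f := continuousOn_univ.mp (hf.continuousOn isOpen_univ)
  have hint : ∀ M : Matrix (Fin d) (Fin q) ℝ, Integrable (fun ω => f (x + M *ᵥ Z ω)) P :=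
    fun M => integrable_comp_of_abs_le_mul_one_add_norm hf_cont hgrowth
      ((integrable_const x).add ((mulVecLin M).toContinuousLinearMap.integrable_comp hZint))
  have hg : ConvexOn ℝ Set.univ fun v => f (x + B *ᵥ v) :=
    (hf.translate_right x).comp_linearMap (mulVecLin B)
  simpa only [mulVec_mulVec] using integral_comp_mulVec_le_of_mem_convexHull
    hZint.aemeasurable hradial hg (hint B) (by simpa only [mulVec_mulVec] using hint (B * K))
    (mem_convexHull_orthogonalGroup_of_posSemidef_one_sub hK)

theorem T_monotone_matrix_preorder (d q : ℕ)
    (Ω : Type*) [MeasurableSpace Ω] (P : Measure Ω) [IsProbabilityMeasure P]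
    (Z : Ω → (Fin q → ℝ)) (hZmeas : Measurable Z) (hZint : Integrable Z P)
    (hradial : ∀ O ∈ Matrix.orthogonalGroup (Fin q) ℝ,
      Measure.map (fun ω => (O : Matrix (Fin q) (Fin q) ℝ).mulVec (Z ω)) P
        = Measure.map Z P)
    (f : (Fin d → ℝ) → ℝ) (hf : ConvexOn ℝ Set.univ f)
    (C : ℝ) (hgrowth : ∀ x, |f x| ≤ C * (1 + ‖x‖)) :
    ∀ (x : Fin d → ℝ) (A B : Matrix (Fin d) (Fin q) ℝ),
      (B * Bᵀ - A * Aᵀ).PosSemidef →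
      ∫ ω, f (x + A.mulVec (Z ω)) ∂P ≤ ∫ ω, f (x + B.mulVec (Z ω)) ∂P :=
  T_monotone_matrix_preorder_general d q Ω P Z hZint hradial f hf C hgrowth
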